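/- arXiv:1003.4915 — 2 statements merged into one kernel-verified Lean document; each statement's English description precedes it below -/
import Mathlib

section
/- Under the hypotheses that Y ⊆ ℝᵖ is compact, K ⊆ ℝⁿ × Y is compact with each fiber K_y nonempty, and f is continuous, the infimum ρ = inf{∫_K f dμ : μ probability measure on K with marginal φ on Y} satisfies ρ = ∫_Y J(y) dφ(y), where J(y) = min{f(x,y) : x ∈ K_y}, and the infimum ρ is attained by some measure μ*. -/
open MeasureTheory Metric Filter Topology Set

namespace Stmt3Aux

variable {n p : ℕ}

/-- The value function: min of `f (·, y)` over the fiber of `K` at `y`. -/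
noncomputable def Jf (K : Set ((Fin n → ℝ) × (Fin p → ℝ)))
    (f : ((Fin n → ℝ) × (Fin p → ℝ)) → ℝ) (y : Fin p → ℝ) : ℝ :=
  sInf ((fun x => f (x, y)) '' {x | (x, y) ∈ K})

/-- min of `f (·, y)` over the fiber intersected with `C`. -/
noncomputable def mC (K : Set ((Fin n → ℝ) × (Fin p → ℝ)))
    (f : ((Fin n → ℝ) × (Fin p → ℝ)) → ℝ) (C : Set (Fin n → ℝ)) (y : Fin p → ℝ) : ℝ :=
  sInf ((fun x => f (x, y)) '' ({x | (x, y) ∈ K} ∩ C))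

/-- Argmin set in the fiber at `y`. -/
def Arg (K : Set ((Fin n → ℝ) × (Fin p → ℝ)))
    (f : ((Fin n → ℝ) × (Fin p → ℝ)) → ℝ) (y : Fin p → ℝ) : Set (Fin n → ℝ) :=
  {x | (x, y) ∈ K ∧ f (x, y) = Jf K f y}

/-- A dense sequence in `ℝⁿ`. -/
noncomputable def qd (n : ℕ) : ℕ → (Fin n → ℝ) := TopologicalSpace.denseSeq _

lemma denseRange_qd (n : ℕ) : DenseRange (qd n) := TopologicalSpace.denseRange_denseSeq _

open Classical in
/-- Pick the least index of a `2⁻ᵏ`-closed-ball meeting `S`. -/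
noncomputable def pick (k : ℕ) (S : Set (Fin n → ℝ)) : ℕ :=
  if h : ∃ i, (S ∩ closedBall (qd n i) ((1/2 : ℝ)^k)).Nonempty then Nat.find h else 0

/-- The shrinking sequence of subsets of the argmin set. -/
noncomputable def FS (K : Set ((Fin n → ℝ) × (Fin p → ℝ)))
    (f : ((Fin n → ℝ) × (Fin p → ℝ)) → ℝ) : ℕ → (Fin p → ℝ) → Set (Fin n → ℝ)
  | 0, y => Arg K f y
  | (k+1), y => FS K f k y ∩ closedBall (qd n (pick k (FS K f k y))) ((1/2 : ℝ)^k)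

noncomputable def idx (K : Set ((Fin n → ℝ) × (Fin p → ℝ)))
    (f : ((Fin n → ℝ) × (Fin p → ℝ)) → ℝ) (k : ℕ) (y : Fin p → ℝ) : ℕ :=
  pick k (FS K f k y)

noncomputable def gseq (K : Set ((Fin n → ℝ) × (Fin p → ℝ)))
    (f : ((Fin n → ℝ) × (Fin p → ℝ)) → ℝ) (k : ℕ) (y : Fin p → ℝ) : Fin n → ℝ :=
  qd n (idx K f k y)

/-- The selection. -/
noncomputable def sel (K : Set ((Fin n → ℝ) × (Fin p → ℝ)))
    (f : ((Fin n → ℝ) × (Fin p → ℝ)) → ℝ) (y : Fin p → ℝ) : Fin n → ℝ :=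
  limUnder atTop (fun k => gseq K f k y)

section Lemmas

variable {K : Set ((Fin n → ℝ) × (Fin p → ℝ))} {f : ((Fin n → ℝ) × (Fin p → ℝ)) → ℝ}
variable (hK : IsCompact K) (hf : Continuous f)

lemma fiber_sub_image (y : Fin p → ℝ) :
    (fun x => f (x, y)) '' ({x | (x, y) ∈ K}) ⊆ f '' K := by
  rintro - ⟨x, hx, rfl⟩
  exact ⟨(x, y), hx, rfl⟩

include hK hf in
lemma bdd_fiber (y : Fin p → ℝ) (C : Set (Fin n → ℝ)) :
    BddBelow ((fun x => f (x, y)) '' ({x | (x, y) ∈ K} ∩ C)) :=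
  (hK.image hf).bddBelow.mono <|
    (Set.image_mono (Set.inter_subset_left)).trans (fiber_sub_image y)

include hK hf in
lemma bdd_fiber' (y : Fin p → ℝ) :
    BddBelow ((fun x => f (x, y)) '' {x | (x, y) ∈ K}) :=
  (hK.image hf).bddBelow.mono (fiber_sub_image y)

include hK in
lemma fiber_compact (y : Fin p → ℝ) : IsCompact {x | (x, y) ∈ K} := by
  refine (hK.image continuous_fst).of_isClosed_subset
    (IsClosed.preimage (continuous_id.prodMk continuous_const) hK.isClosed)
    (fun x hx => ⟨(x, y), hx, rfl⟩)

include hK hf in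
lemma Jf_le {y : Fin p → ℝ} {x : Fin n → ℝ} (hx : (x, y) ∈ K) : Jf K f y ≤ f (x, y) :=
  csInf_le (bdd_fiber' hK hf y) ⟨x, hx, rfl⟩

include hK hf in
lemma attain {C : Set (Fin n → ℝ)} (hC : IsClosed C) {y : Fin p → ℝ}
    (hne : ({x | (x, y) ∈ K} ∩ C).Nonempty) :
    ∃ x ∈ {x | (x, y) ∈ K} ∩ C, f (x, y) = mC K f C y := by
  obtain ⟨x, hx, hmin⟩ := ((fiber_compact hK y).inter_right hC).exists_isMinOn hne
    ((hf.comp (continuous_id.prodMk continuous_const)).continuousOn)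
  refine ⟨x, hx, ?_⟩
  have hle : IsLeast ((fun x => f (x, y)) '' ({x | (x, y) ∈ K} ∩ C)) (f (x, y)) := by
    constructor
    · exact ⟨x, hx, rfl⟩
    · rintro - ⟨x', hx', rfl⟩
      exact hmin hx'
  exact hle.csInf_eq.symm

include hK hf in
lemma arg_nonempty {y : Fin p → ℝ} (hne : {x | (x, y) ∈ K}.Nonempty) :
    (Arg K f y).Nonempty := by
  obtain ⟨x, hx, hfx⟩ := attain hK hf isClosed_univ (by simpa using hne)
  have hx' : (x, y) ∈ K := hx.1
  refine ⟨x, ?_⟩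
  simp only [Arg, Set.mem_setOf_eq]
  refine ⟨hx', ?_⟩
  rw [hfx]
  unfold mC Jf
  rw [Set.inter_univ]

lemma arg_subset (y : Fin p → ℝ) : Arg K f y ⊆ {x | (x, y) ∈ K} := fun _ h => h.1

include hK hf in
/-- mC is measurable for compact C. -/
lemma meas_mC {C : Set (Fin n → ℝ)} (hC : IsCompact C) : Measurable (mC K f C) := by
  apply measurable_of_Iic
  intro a
  have hDc : IsCompact (K ∩ (C ×ˢ (univ : Set (Fin p → ℝ)))) :=
    hK.inter_right (hC.isClosed.prod isClosed_univ)
  set S : Set (Fin p → ℝ) := Prod.snd '' (K ∩ (C ×ˢ univ) ∩ f ⁻¹' Iic a) with hS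
  set D : Set (Fin p → ℝ) := Prod.snd '' (K ∩ (C ×ˢ univ)) with hD
  have hSc : IsCompact S := (hDc.inter_right (isClosed_Iic.preimage hf)).image continuous_snd
  have hDcc : IsCompact D := hDc.image continuous_snd
  have key : mC K f C ⁻¹' Iic a = S ∪ (Dᶜ ∩ {_y | (0:ℝ) ≤ a}) := by
    ext y
    simp only [mem_preimage, mem_Iic, mem_union, mem_inter_iff, mem_compl_iff, mem_setOf_eq]
    constructor
    · intro h
      by_cases hne : ({x | (x, y) ∈ K} ∩ C).Nonempty
      · obtain ⟨x, hx, hfx⟩ := attain hK hf hC.isClosed hne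
        left
        exact ⟨(x, y), ⟨⟨hx.1, hx.2, trivial⟩, by simpa [← hfx] using h⟩, rfl⟩
      · right
        constructor
        · rintro ⟨⟨x', y'⟩, ⟨hz, hx'C, -⟩, rfl⟩
          exact hne ⟨x', hz, hx'C⟩
        · have : ({x | (x, y) ∈ K} ∩ C) = ∅ := Set.not_nonempty_iff_eq_empty.mp hne
          simpa [mC, this, Real.sInf_empty] using h
    · rintro (⟨⟨x', y'⟩, ⟨⟨hz, hx'C, -⟩, hfa⟩, rfl⟩ | ⟨hnD, ha⟩)
      · exact le_trans (csInf_le (bdd_fiber hK hf _ C) ⟨x', ⟨hz, hx'C⟩, rfl⟩) hfa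
      · have : ({x | (x, y) ∈ K} ∩ C) = ∅ := by
          rw [Set.not_nonempty_iff_eq_empty.symm]
          rintro ⟨x, hxK, hxC⟩
          exact hnD ⟨(x, y), ⟨hxK, hxC, trivial⟩, rfl⟩
        simpa [mC, this, Real.sInf_empty] using ha
  rw [key]
  exact (hSc.isClosed.measurableSet).union
    ((hDcc.isClosed.measurableSet.compl).inter (MeasurableSet.const _))

omit hK hf in
lemma Jf_eq_mC {C₀ : Set (Fin n → ℝ)} (hKC₀ : ∀ z ∈ K, z.1 ∈ C₀) :
    Jf K f = mC K f C₀ := by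
  funext y
  unfold Jf mC
  have h1 : {x | (x, y) ∈ K} ∩ C₀ = {x | (x, y) ∈ K} :=
    Set.inter_eq_left.mpr (fun x hx => hKC₀ (x, y) hx)
  rw [h1]

include hK hf in
lemma meas_argmeet {C₀ : Set (Fin n → ℝ)} (hC₀ : IsCompact C₀) (hKC₀ : ∀ z ∈ K, z.1 ∈ C₀)
    {C : Set (Fin n → ℝ)} (hC : IsCompact C) :
    MeasurableSet {y | (Arg K f y ∩ C).Nonempty} := by
  have hD : IsCompact (Prod.snd '' (K ∩ (C ×ˢ (univ : Set (Fin p → ℝ))))) :=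
    (hK.inter_right (hC.isClosed.prod isClosed_univ)).image continuous_snd
  have key : {y | (Arg K f y ∩ C).Nonempty}
      = (Prod.snd '' (K ∩ (C ×ˢ univ))) ∩ {y | mC K f C y ≤ Jf K f y} := by
    ext y
    simp only [mem_setOf_eq, mem_inter_iff]
    constructor
    · rintro ⟨x, ⟨hxK, hxf⟩, hxC⟩
      refine ⟨⟨(x, y), ⟨hxK, hxC, trivial⟩, rfl⟩, ?_⟩
      calc mC K f C y ≤ f (x, y) := csInf_le (bdd_fiber hK hf y C) ⟨x, ⟨hxK, hxC⟩, rfl⟩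
        _ = Jf K f y := hxf
    · rintro ⟨⟨⟨x', y'⟩, ⟨hz, hx'C, -⟩, rfl⟩, hle⟩
      obtain ⟨x, hx, hfx⟩ := attain hK hf hC.isClosed ⟨x', hz, hx'C⟩
      refine ⟨x, ⟨hx.1, le_antisymm (by rw [hfx]; exact hle) (Jf_le hK hf hx.1)⟩, hx.2⟩
  rw [key]
  exact hD.isClosed.measurableSet.inter
    (measurableSet_le (meas_mC hK hf hC)
      (by rw [Jf_eq_mC hKC₀]; exact meas_mC hK hf hC₀))

include hK hf in
lemma meas_pickC {C₀ : Set (Fin n → ℝ)} (hC₀ : IsCompact C₀) (hKC₀ : ∀ z ∈ K, z.1 ∈ C₀)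
    {C : Set (Fin n → ℝ)} (hC : IsCompact C) (k m : ℕ) :
    MeasurableSet {y | pick k (Arg K f y ∩ C) = m} := by
  classical
  set N : ℕ → Set (Fin p → ℝ) :=
    fun i => {y | (Arg K f y ∩ (C ∩ closedBall (qd n i) ((1/2:ℝ)^k))).Nonempty} with hN
  have hNm : ∀ i, MeasurableSet (N i) := fun i =>
    meas_argmeet hK hf hC₀ hKC₀ (hC.inter_right isClosed_closedBall)
  have key : {y | pick k (Arg K f y ∩ C) = m}
      = (N m ∩ ⋂ j, ⋂ (_ : j < m), (N j)ᶜ) ∪ ({_y | m = 0} ∩ ⋂ i, (N i)ᶜ) := by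
    ext y
    have hassoc : ∀ i : ℕ, Arg K f y ∩ C ∩ closedBall (qd n i) ((1/2:ℝ)^k)
        = Arg K f y ∩ (C ∩ closedBall (qd n i) ((1/2:ℝ)^k)) := fun i => Set.inter_assoc _ _ _
    simp only [hN, mem_setOf_eq, mem_union, mem_inter_iff, mem_iInter, mem_compl_iff]
    unfold pick
    split_ifs with h
    · rw [Nat.find_eq_iff h]
      constructor
      · rintro ⟨h1, h2⟩
        left
        exact ⟨by rwa [← hassoc], fun j hj => by rw [← hassoc]; exact h2 j hj⟩
      · rintro (⟨h1, h2⟩ | ⟨rfl, h2⟩)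
        · exact ⟨by rwa [hassoc], fun j hj => by rw [hassoc]; exact h2 j hj⟩
        · obtain ⟨i, hi⟩ := h
          rw [hassoc i] at hi
          exact absurd hi (h2 i)
    · constructor
      · rintro rfl
        right
        exact ⟨rfl, fun i hi => h ⟨i, by rwa [← hassoc] at hi⟩⟩
      · rintro (⟨h1, -⟩ | ⟨rfl, -⟩)
        · rw [← hassoc] at h1
          exact absurd ⟨m, h1⟩ h
        · rfl
  rw [key]
  refine ((hNm m).inter (MeasurableSet.iInter fun j =>
      MeasurableSet.iInter fun _ => (hNm j).compl)).union
    ((MeasurableSet.const _).inter (MeasurableSet.iInter fun i => (hNm i).compl))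

include hK hf in
lemma meas_idx {C₀ : Set (Fin n → ℝ)} (hC₀ : IsCompact C₀) (hKC₀ : ∀ z ∈ K, z.1 ∈ C₀) (k : ℕ) :
    Measurable (idx K f k) := by
  have inv : ∀ k : ℕ, ∃ (ι : Type) (_ : Countable ι) (E : ι → Set (Fin p → ℝ))
      (C : ι → Set (Fin n → ℝ)), (∀ i, MeasurableSet (E i)) ∧ (∀ i, IsCompact (C i)) ∧
      (⋃ i, E i) = univ ∧ ∀ i, ∀ y ∈ E i, FS K f k y = Arg K f y ∩ C i := by
    intro k
    induction k with
    | zero =>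
      refine ⟨PUnit, inferInstance, fun _ => univ, fun _ => C₀, fun _ => .univ,
        fun _ => hC₀, Set.eq_univ_of_forall (fun y => Set.mem_iUnion.mpr ⟨⟨⟩, trivial⟩), fun i y _ => ?_⟩
      show Arg K f y = Arg K f y ∩ C₀
      rw [Set.inter_eq_left.mpr (fun x hx => hKC₀ (x, y) hx.1)]
    | succ k ih =>
      obtain ⟨ι, hι, E, C, hE, hC, hcov, hprop⟩ := ih
      haveI := hι
      refine ⟨ι × ℕ, inferInstance,
        fun im => E im.1 ∩ {y | pick k (Arg K f y ∩ C im.1) = im.2},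
        fun im => C im.1 ∩ closedBall (qd n im.2) ((1/2:ℝ)^k),
        fun im => (hE im.1).inter (meas_pickC hK hf hC₀ hKC₀ (hC im.1) k im.2),
        fun im => (hC im.1).inter_right isClosed_closedBall, ?_, ?_⟩
      · apply Set.eq_univ_of_forall
        intro y
        have hy : y ∈ ⋃ i, E i := by rw [hcov]; trivial
        obtain ⟨i, hi⟩ := Set.mem_iUnion.mp hy
        exact Set.mem_iUnion.mpr ⟨(i, pick k (Arg K f y ∩ C i)), hi, rfl⟩
      · rintro ⟨i, m⟩ y ⟨hyE, hym⟩
        have hym' : pick k (Arg K f y ∩ C i) = m := hym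
        have hFk : FS K f k y = Arg K f y ∩ C i := hprop i y hyE
        show FS K f k y ∩ closedBall (qd n (pick k (FS K f k y))) ((1/2:ℝ)^k) = _
        rw [hFk, hym', Set.inter_assoc]
  obtain ⟨ι, hι, E, C, hE, hC, hcov, hprop⟩ := inv k
  haveI := hι
  have hm : ∀ m : ℕ, MeasurableSet {y | idx K f k y = m} := by
    intro m
    have key : {y | idx K f k y = m}
        = ⋃ i, (E i ∩ {y | pick k (Arg K f y ∩ C i) = m}) := by
      ext y
      simp only [mem_setOf_eq, mem_iUnion, mem_inter_iff]
      constructor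
      · intro h
        have hy : y ∈ ⋃ i, E i := by rw [hcov]; trivial
        obtain ⟨i, hi⟩ := Set.mem_iUnion.mp hy
        refine ⟨i, hi, ?_⟩
        show pick k (Arg K f y ∩ C i) = m
        rw [← hprop i y hi]
        exact h
      · rintro ⟨i, hi, hm'⟩
        show pick k (FS K f k y) = m
        rw [hprop i y hi]
        exact hm'
    rw [key]
    exact MeasurableSet.iUnion fun i =>
      (hE i).inter (meas_pickC hK hf hC₀ hKC₀ (hC i) k m)
  refine measurable_to_countable' fun m => ?_
  have : idx K f k ⁻¹' {m} = {y | idx K f k y = m} := by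
    ext y; simp [Set.mem_preimage]
  rw [this]
  exact hm m

lemma FS_subset_arg (y : Fin p → ℝ) : ∀ k, FS K f k y ⊆ Arg K f y := by
  intro k
  induction k with
  | zero => exact le_refl _
  | succ k ih => exact Set.inter_subset_left.trans ih

include hK hf in
lemma FS_nonempty {y : Fin p → ℝ} (hne : {x | (x, y) ∈ K}.Nonempty) :
    ∀ k, (FS K f k y).Nonempty := by
  classical
  intro k
  induction k with
  | zero => exact arg_nonempty hK hf hne
  | succ k ih =>
    obtain ⟨x, hx⟩ := ih
    have hr : (0:ℝ) < (1/2)^k := by positivity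
    obtain ⟨i, hi⟩ := (denseRange_qd n).exists_dist_lt x hr
    have hex : ∃ i, (FS K f k y ∩ closedBall (qd n i) ((1/2:ℝ)^k)).Nonempty :=
      ⟨i, x, hx, by rw [mem_closedBall]; exact hi.le⟩
    show (FS K f k y ∩ closedBall (qd n (pick k (FS K f k y))) ((1/2:ℝ)^k)).Nonempty
    unfold pick
    rw [dif_pos hex]
    exact Nat.find_spec hex

lemma FS_succ_subset_ball (y : Fin p → ℝ) (k : ℕ) :
    FS K f (k+1) y ⊆ closedBall (gseq K f k y) ((1/2:ℝ)^k) :=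
  Set.inter_subset_right

lemma FS_antitone (y : Fin p → ℝ) : ∀ {k m : ℕ}, k ≤ m → FS K f m y ⊆ FS K f k y := by
  intro k m hkm
  induction hkm with
  | refl => exact le_refl _
  | step _ ih => exact Set.inter_subset_left.trans ih

omit hK hf in
lemma FS_empty {y : Fin p → ℝ} (hne : ¬{x | (x, y) ∈ K}.Nonempty) (k : ℕ) :
    FS K f k y = ∅ := by
  induction k with
  | zero =>
    rw [Set.eq_empty_iff_forall_notMem]
    exact fun x hx => hne ⟨x, hx.1⟩
  | succ k ih =>
    show FS K f k y ∩ _ = ∅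
    rw [ih, Set.empty_inter]

include hK hf in
lemma tendsto_gseq (y : Fin p → ℝ) :
    Tendsto (fun k => gseq K f k y) atTop (𝓝 (sel K f y)) := by
  apply tendsto_nhds_limUnder
  by_cases hne : {x | (x, y) ∈ K}.Nonempty
  · have hcauchy : CauchySeq (fun k => gseq K f k y) := by
      apply cauchySeq_of_le_geometric (1/2 : ℝ) 2 (by norm_num)
      intro k
      obtain ⟨x, hx⟩ := FS_nonempty hK hf hne (k + 2)
      have hx1 : x ∈ closedBall (gseq K f k y) ((1/2:ℝ)^k) :=
        FS_succ_subset_ball y k (FS_antitone y (by omega) hx)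
      have hx2 : x ∈ closedBall (gseq K f (k+1) y) ((1/2:ℝ)^(k+1)) :=
        FS_succ_subset_ball y (k+1) hx
      calc dist (gseq K f k y) (gseq K f (k+1) y)
          ≤ dist (gseq K f k y) x + dist x (gseq K f (k+1) y) := dist_triangle _ _ _
        _ ≤ (1/2:ℝ)^k + (1/2:ℝ)^(k+1) := by
            gcongr
            · rw [dist_comm]; exact mem_closedBall.mp hx1
            · exact mem_closedBall.mp hx2
        _ ≤ 2 * (1/2:ℝ)^k := by
            have : (0:ℝ) < (1/2)^k := by positivity
            rw [pow_succ]
            nlinarith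
    exact cauchySeq_tendsto_of_complete hcauchy
  · refine ⟨qd n 0, ?_⟩
    have hconst : ∀ k, gseq K f k y = qd n 0 := by
      intro k
      unfold gseq idx pick
      rw [dif_neg]
      rintro ⟨i, x, hx, -⟩
      rw [FS_empty hne k] at hx
      exact hx
    simp only [hconst]
    exact tendsto_const_nhds

include hK hf in
lemma sel_mem {y : Fin p → ℝ} (hne : {x | (x, y) ∈ K}.Nonempty) :
    sel K f y ∈ Arg K f y := by
  have harg_closed : IsClosed (Arg K f y) := by
    have : Arg K f y
        = (fun x => (x, y)) ⁻¹' K ∩ {x | f (x, y) = Jf K f y} := rfl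
    rw [this]
    exact (hK.isClosed.preimage (continuous_id.prodMk continuous_const)).inter
      (isClosed_eq (hf.comp (continuous_id.prodMk continuous_const)) continuous_const)
  choose xs hxs using fun k => FS_nonempty hK hf hne (k + 1)
  have hxs_arg : ∀ k, xs k ∈ Arg K f y := fun k => FS_subset_arg y (k+1) (hxs k)
  have hdist : ∀ k, dist (xs k) (gseq K f k y) ≤ (1/2:ℝ)^k := fun k =>
    mem_closedBall.mp (FS_succ_subset_ball y k (hxs k))
  have htend : Tendsto xs atTop (𝓝 (sel K f y)) := by
    rw [tendsto_iff_dist_tendsto_zero]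
    have hb : ∀ k, dist (xs k) (sel K f y)
        ≤ (1/2:ℝ)^k + dist (gseq K f k y) (sel K f y) := fun k =>
      (dist_triangle _ _ _).trans (by gcongr; exact hdist k)
    have h0 : Tendsto (fun k => (1/2:ℝ)^k + dist (gseq K f k y) (sel K f y)) atTop (𝓝 0) := by
      have h1 : Tendsto (fun k => ((1/2:ℝ)^k)) atTop (𝓝 0) :=
        tendsto_pow_atTop_nhds_zero_of_lt_one (by norm_num) (by norm_num)
      have h2 : Tendsto (fun k => dist (gseq K f k y) (sel K f y)) atTop (𝓝 0) :=
        (tendsto_iff_dist_tendsto_zero).mp (tendsto_gseq hK hf y)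
      simpa using h1.add h2
    exact squeeze_zero (fun k => dist_nonneg) hb h0
  exact harg_closed.mem_of_tendsto htend (Filter.Eventually.of_forall hxs_arg)

include hK hf in
lemma sel_measurable {C₀ : Set (Fin n → ℝ)} (hC₀ : IsCompact C₀)
    (hKC₀ : ∀ z ∈ K, z.1 ∈ C₀) : Measurable (sel K f) := by
  apply measurable_of_tendsto_metrizable (f := fun k => gseq K f k)
  · intro k
    exact measurable_from_nat.comp (meas_idx hK hf hC₀ hKC₀ k)
  · rw [tendsto_pi_nhds]
    exact fun y => tendsto_gseq hK hf y

end Lemmas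

end Stmt3Aux

open Stmt3Aux in
/-- ρ = inf {∫ f dμ : μ probability on K with marginal φ} equals ∫ J dφ with
J(y) = min {f(x,y) : x ∈ K_y}, and the infimum is attained. -/
theorem stmt_3 (n p : ℕ)
    (Y : Set (Fin p → ℝ)) (K : Set ((Fin n → ℝ) × (Fin p → ℝ)))
    (hY : IsCompact Y) (hK : IsCompact K)
    (hKY : ∀ z ∈ K, z.2 ∈ Y)
    (hfib : ∀ y ∈ Y, ∃ x, (x, y) ∈ K)
    (f : (Fin n → ℝ) × (Fin p → ℝ) → ℝ) (hf : Continuous f)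
    (φ : Measure (Fin p → ℝ)) [IsProbabilityMeasure φ] (hφY : φ Y = 1) :
    IsLeast
      {r : ℝ | ∃ μ : Measure ((Fin n → ℝ) × (Fin p → ℝ)),
        IsProbabilityMeasure μ ∧ μ K = 1 ∧ μ.map Prod.snd = φ ∧
        r = ∫ z, f z ∂μ}
      (∫ y, sInf ((fun x => f (x, y)) '' {x | (x, y) ∈ K}) ∂φ) := by
  classical
  obtain ⟨R, hR⟩ := ((hK.image continuous_fst).isBounded).subset_closedBall 0
  set C₀ := closedBall (0 : Fin n → ℝ) R with hC₀def
  have hC₀ : IsCompact C₀ := isCompact_closedBall _ _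
  have hKC₀ : ∀ z ∈ K, z.1 ∈ C₀ := fun z hz => hR ⟨z, hz, rfl⟩
  have hsel_meas : Measurable (sel K f) := sel_measurable hK hf hC₀ hKC₀
  have hJmeas : Measurable (Jf K f) := by
    rw [Jf_eq_mC hKC₀]
    exact meas_mC hK hf hC₀
  obtain ⟨M, hM⟩ := hK.exists_bound_of_continuousOn hf.continuousOn
  set M' := max M 0 with hM'def
  have hM' : ∀ z ∈ K, ‖f z‖ ≤ M' := fun z hz => (hM z hz).trans (le_max_left _ _)
  have hM'0 : (0:ℝ) ≤ M' := le_max_right _ _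
  have hJbound : ∀ y, ‖Jf K f y‖ ≤ M' := by
    intro y
    by_cases hne : {x | (x, y) ∈ K}.Nonempty
    · obtain ⟨x, hxK, hxf⟩ := arg_nonempty hK hf hne
      rw [← hxf]
      exact hM' (x, y) hxK
    · have hemp : {x | (x, y) ∈ K} = ∅ := Set.not_nonempty_iff_eq_empty.mp hne
      simp only [Jf, hemp, Set.image_empty, Real.sInf_empty]
      simpa using hM'0
  have hYmeas : MeasurableSet Y := hY.isClosed.measurableSet
  have hKmeas : MeasurableSet K := hK.isClosed.measurableSet
  have haeY : ∀ᵐ y ∂φ, y ∈ Y := by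
    have hc : φ Yᶜ = 0 := by
      have := measure_compl hYmeas (measure_ne_top φ Y)
      rw [hφY, measure_univ] at this
      simpa using this
    rw [ae_iff]
    simpa [Set.compl_def] using hc
  constructor
  · -- the infimum is attained
    set e : (Fin p → ℝ) → (Fin n → ℝ) × (Fin p → ℝ) := fun y => (sel K f y, y) with hedef
    have he : Measurable e := hsel_meas.prodMk measurable_id
    have heK : ∀ y ∈ Y, e y ∈ K := by
      intro y hy
      obtain ⟨x, hx⟩ := hfib y hy
      exact (sel_mem hK hf ⟨x, hx⟩).1
    refine ⟨φ.map e, Measure.isProbabilityMeasure_map he.aemeasurable, ?_, ?_, ?_⟩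
    · rw [Measure.map_apply he hKmeas]
      refine le_antisymm prob_le_one ?_
      calc (1 : ENNReal) = φ Y := hφY.symm
        _ ≤ φ (e ⁻¹' K) := measure_mono (fun y hy => heK y hy)
    · rw [Measure.map_map measurable_snd he]
      have hcomp : Prod.snd ∘ e = id := rfl
      rw [hcomp, Measure.map_id]
    · rw [integral_map he.aemeasurable hf.aestronglyMeasurable]
      refine integral_congr_ae ?_
      filter_upwards [haeY] with y hy
      obtain ⟨x, hx⟩ := hfib y hy
      exact ((sel_mem hK hf ⟨x, hx⟩).2).symm
  · -- lower bound
    rintro r ⟨μ, hμprob, hμK, hμmap, rfl⟩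
    haveI := hμprob
    have haeK : ∀ᵐ z ∂μ, z ∈ K := by
      have hc : μ Kᶜ = 0 := by
        have := measure_compl hKmeas (measure_ne_top μ K)
        rw [hμK, measure_univ] at this
        simpa using this
      rw [ae_iff]
      simpa [Set.compl_def] using hc
    have hintf : Integrable f μ := by
      refine Integrable.mono' (integrable_const M') hf.aestronglyMeasurable ?_
      filter_upwards [haeK] with z hz
      exact hM' z hz
    have hintJ : Integrable (fun z : (Fin n → ℝ) × (Fin p → ℝ) => Jf K f z.2) μ := by
      refine Integrable.mono' (integrable_const M')
        ((hJmeas.comp measurable_snd).aestronglyMeasurable) ?_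
      exact Filter.Eventually.of_forall fun z => hJbound z.2
    have hle : ∀ᵐ z ∂μ, Jf K f z.2 ≤ f z := by
      filter_upwards [haeK] with z hz
      have : Jf K f z.2 ≤ f (z.1, z.2) := Jf_le hK hf (by simpa using hz)
      simpa using this
    have h1 : ∫ y, Jf K f y ∂φ = ∫ z, Jf K f z.2 ∂μ := by
      rw [← hμmap, integral_map measurable_snd.aemeasurable hJmeas.aestronglyMeasurable]
    calc ∫ y, Jf K f y ∂φ = ∫ z, Jf K f z.2 ∂μ := h1
      _ ≤ ∫ z, f z ∂μ := integral_mono_ae hintJ hintf hle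
end

section
/- There is no duality gap between the primal LP ρ = inf{∫_K f dμ : μ probability measure on K with marginal φ} and its dual ρ* = sup{∫_Y p dφ : p ∈ ℝ[y], f(x,y) − p(y) ≥ 0 on K}; that is, ρ = ρ*. -/
open MeasureTheory Set Filter Topology
open scoped Classical NNReal

namespace NDG

/-! ### firstHit machinery -/

variable {α β : Type*}

noncomputable def findIdx (E : ℕ → Set α) (a : α) : ℕ :=
  if h : ∃ k, a ∈ E k then Nat.find h else 0

lemma measurable_findIdx [MeasurableSpace α] {E : ℕ → Set α}
    (hE : ∀ k, MeasurableSet (E k)) : Measurable (findIdx E) := by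
  apply measurable_to_countable'
  intro k
  have : findIdx E ⁻¹' {k} =
      (E k ∩ ⋂ j ∈ Finset.range k, (E j)ᶜ) ∪ (if k = 0 then ⋂ j, (E j)ᶜ else ∅) := by
    ext a
    simp only [mem_preimage, mem_singleton_iff, findIdx, mem_union, mem_inter_iff, mem_iInter,
      mem_compl_iff, Finset.mem_range]
    by_cases h : ∃ j, a ∈ E j
    · rw [dif_pos h]
      classical
      constructor
      · intro hk
        subst hk
        left
        exact ⟨Nat.find_spec h, fun j hj => Nat.find_min h hj⟩
      · rintro (⟨h1, h2⟩ | h2)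
        · exact le_antisymm (Nat.find_le h1) (Nat.le_find_iff h k |>.2 fun j hj => h2 j hj)
        · rcases k with _ | k
          · simp only [if_true, mem_iInter, mem_compl_iff] at h2
            exact absurd h (by push_neg; exact h2)
          · simp at h2
    · rw [dif_neg h]
      push_neg at h
      constructor
      · intro hk
        subst hk
        right
        simp only [if_true, mem_iInter, mem_compl_iff]
        exact h
      · rintro (⟨h1, _⟩ | h2)
        · exact absurd h1 (h k)
        · rcases k with _ | k
          · rfl
          · simp at h2
  rw [this]
  apply MeasurableSet.union
  · exact (hE k).inter (MeasurableSet.biInter (Set.to_countable _) fun j _ => (hE j).compl)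
  · split
    · exact MeasurableSet.iInter fun j => (hE j).compl
    · exact MeasurableSet.empty

noncomputable def optSet [Encodable β] (T : β → Set α) (k : ℕ) : Set α :=
  match Encodable.decode (α := β) k with
  | some b => T b
  | none => ∅

noncomputable def firstHit [Encodable β] [Inhabited β] (T : β → Set α) (a : α) : β :=
  (Encodable.decode (α := β) (findIdx (optSet T) a)).getD default

lemma mem_optSet_iff [Encodable β] {T : β → Set α} {k : ℕ} {a : α} :
    a ∈ optSet T k ↔ ∃ b, Encodable.decode (α := β) k = some b ∧ a ∈ T b := by
  unfold optSet
  rcases h : Encodable.decode (α := β) k with _ | b <;> simp [h]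

lemma firstHit_mem [Encodable β] [Inhabited β] {T : β → Set α} {a : α}
    (h : ∃ b, a ∈ T b) : a ∈ T (firstHit T a) := by
  obtain ⟨b, hb⟩ := h
  have hex : ∃ k, a ∈ optSet T k :=
    ⟨Encodable.encode b, mem_optSet_iff.2 ⟨b, Encodable.encodek b, hb⟩⟩
  have h1 : a ∈ optSet T (findIdx (optSet T) a) := by
    unfold findIdx
    rw [dif_pos hex]
    exact Nat.find_spec hex
  rw [mem_optSet_iff] at h1
  obtain ⟨b', hb', hab'⟩ := h1
  unfold firstHit
  rw [hb']
  exact hab'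

lemma measurable_firstHit [Encodable β] [Inhabited β] [MeasurableSpace α]
    [MeasurableSpace β] {T : β → Set α} (hT : ∀ b, MeasurableSet (T b)) :
    Measurable (firstHit T) := by
  have : firstHit T = (fun k => (Encodable.decode (α := β) k).getD default) ∘ findIdx (optSet T) :=
    rfl
  rw [this]
  apply measurable_from_top.comp
  apply measurable_findIdx
  intro k
  unfold optSet
  rcases Encodable.decode (α := β) k with _ | b
  · exact MeasurableSet.empty
  · exact hT b


variable {n q : ℕ}

noncomputable def gS (f : (Fin n → ℝ) × (Fin q → ℝ) → ℝ)
    (A : Set ((Fin n → ℝ) × (Fin q → ℝ))) (y : Fin q → ℝ) : ℝ :=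
  sInf (f '' {z ∈ A | z.2 = y})

variable {f : (Fin n → ℝ) × (Fin q → ℝ) → ℝ} {A : Set ((Fin n → ℝ) × (Fin q → ℝ))}

lemma bddBelow_fib (hA : IsCompact A) (hf : Continuous f) (y : Fin q → ℝ) :
    BddBelow (f '' {z ∈ A | z.2 = y}) :=
  ((hA.image hf).bddBelow).mono (image_mono (sep_subset _ _))

lemma fib_nonempty {y : Fin q → ℝ} (hy : y ∈ Prod.snd '' A) :
    (f '' {z ∈ A | z.2 = y}).Nonempty := by
  obtain ⟨z, hz, rfl⟩ := hy
  exact ⟨f z, ⟨z, ⟨hz, rfl⟩, rfl⟩⟩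

lemma gS_le (hA : IsCompact A) (hf : Continuous f) {z : (Fin n → ℝ) × (Fin q → ℝ)}
    (hz : z ∈ A) : gS f A z.2 ≤ f z :=
  csInf_le (bddBelow_fib hA hf _) ⟨z, ⟨hz, rfl⟩, rfl⟩

lemma le_gS {y : Fin q → ℝ} {c : ℝ} (h : ∀ x, (x, y) ∈ A → c ≤ f (x, y))
    (hy : y ∈ Prod.snd '' A) : c ≤ gS f A y := by
  apply le_csInf (fib_nonempty hy)
  rintro _ ⟨z, ⟨hz, hz2⟩, rfl⟩
  have : z = (z.1, y) := by rw [← hz2]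
  rw [this] at hz ⊢
  exact h z.1 hz

lemma gS_lt_iff (hA : IsCompact A) (hf : Continuous f) {y : Fin q → ℝ} {c : ℝ}
    (hy : y ∈ Prod.snd '' A) :
    gS f A y < c ↔ ∃ x, (x, y) ∈ A ∧ f (x, y) < c := by
  constructor
  · intro h
    obtain ⟨_, ⟨z, ⟨hz, hz2⟩, rfl⟩, hlt⟩ := exists_lt_of_csInf_lt (fib_nonempty hy) h
    have : z = (z.1, y) := by rw [← hz2]
    rw [this] at hz hlt
    exact ⟨z.1, hz, hlt⟩
  · rintro ⟨x, hx, hlt⟩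
    exact lt_of_le_of_lt (gS_le hA hf hx) hlt

lemma gS_of_not_mem {y : Fin q → ℝ} (hy : y ∉ Prod.snd '' A) : gS f A y = 0 := by
  have : {z ∈ A | z.2 = y} = ∅ := by
    ext z
    simp only [mem_sep_iff, mem_empty_iff_false, iff_false, not_and]
    intro hz hz2
    exact hy ⟨z, hz, hz2⟩
  rw [gS, this, image_empty, Real.sInf_empty]

lemma measurable_gS (hA : IsCompact A) (hf : Continuous f) : Measurable (gS f A) := by
  apply measurable_of_Iio
  intro c
  have : gS f A ⁻¹' Iio c =
      (⋃ m : ℕ, Prod.snd '' (A ∩ f ⁻¹' Iic (c - 1 / (m + 1)))) ∪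
        ({_y : Fin q → ℝ | (0:ℝ) < c} ∩ (Prod.snd '' A)ᶜ) := by
    ext y
    simp only [mem_preimage, mem_Iio, mem_union, mem_iUnion, mem_inter_iff, mem_compl_iff,
      mem_setOf_eq]
    constructor
    · intro h
      by_cases hy : y ∈ Prod.snd '' A
      · obtain ⟨x, hx, hlt⟩ := (gS_lt_iff hA hf hy).1 h
        obtain ⟨m, hm⟩ := exists_nat_one_div_lt (sub_pos.2 hlt)
        left
        exact ⟨m, (x, y), ⟨hx, by simp only [mem_preimage, mem_Iic]; linarith⟩, rfl⟩
      · right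
        rw [gS_of_not_mem hy] at h
        exact ⟨h, hy⟩
    · rintro (⟨m, z, ⟨hz, hz2⟩, rfl⟩ | ⟨hc, hy⟩)
      · have h1 : gS f A z.2 ≤ f z := gS_le hA hf hz
        simp only [mem_preimage, mem_Iic] at hz2
        have h2 : (0:ℝ) < 1 / (m + 1) := by positivity
        linarith
      · rw [gS_of_not_mem hy]; exact hc
  rw [this]
  apply MeasurableSet.union
  · exact MeasurableSet.iUnion fun m =>
      ((hA.inter_right ((isClosed_Iic).preimage hf)).image continuous_snd).measurableSet
  · apply MeasurableSet.inter
    · by_cases hc : (0:ℝ) < c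
      · simp only [hc, setOf_true]; exact MeasurableSet.univ
      · simp only [hc, setOf_false]; exact MeasurableSet.empty
    · exact ((hA.image continuous_snd).measurableSet).compl


variable {n : ℕ}

def cube (k : ℕ) (v : Fin n → ℤ) : Set (Fin n → ℝ) :=
  univ.pi fun i => Icc ((v i : ℝ) / 2 ^ k) (((v i : ℝ) + 1) / 2 ^ k)

lemma mem_cube_iff {k : ℕ} {v : Fin n → ℤ} {x : Fin n → ℝ} :
    x ∈ cube k v ↔ ∀ i, (v i : ℝ) / 2 ^ k ≤ x i ∧ x i ≤ ((v i : ℝ) + 1) / 2 ^ k := by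
  simp only [cube, Set.mem_pi, mem_univ, forall_true_left, mem_Icc, forall_const]

lemma isClosed_cube (k : ℕ) (v : Fin n → ℤ) : IsClosed (cube k v) :=
  isClosed_set_pi fun i _ => isClosed_Icc

noncomputable def corner (k : ℕ) (v : Fin n → ℤ) : Fin n → ℝ := fun i => (v i : ℝ) / 2 ^ k

lemma corner_mem (k : ℕ) (v : Fin n → ℤ) : corner k v ∈ cube k v := by
  rw [mem_cube_iff]
  intro i
  have hpos : (0:ℝ) < 2 ^ k := by positivity
  exact ⟨le_refl _, (div_le_div_iff_of_pos_right hpos).2 (by linarith)⟩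

lemma dist_le_of_mem_cube {k : ℕ} {v : Fin n → ℤ} {x y : Fin n → ℝ}
    (hx : x ∈ cube k v) (hy : y ∈ cube k v) : dist x y ≤ (1 / 2) ^ k := by
  rw [mem_cube_iff] at hx hy
  rw [dist_pi_le_iff (by positivity)]
  intro i
  have := Real.dist_le_of_mem_Icc (x' := (v i : ℝ) / 2 ^ k) (y' := ((v i : ℝ) + 1) / 2 ^ k)
    (mem_Icc.2 (hx i)) (mem_Icc.2 (hy i))
  calc dist (x i) (y i) ≤ ((v i : ℝ) + 1) / 2 ^ k - (v i : ℝ) / 2 ^ k := this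
    _ = (1 / 2) ^ k := by rw [div_sub_div_same, one_div_pow]; ring_nf

lemma exists_cube0 (x : Fin n → ℝ) : ∃ v, x ∈ cube 0 v := by
  refine ⟨fun i => ⌊x i⌋, ?_⟩
  rw [mem_cube_iff]
  intro i
  simp only [pow_zero, div_one]
  exact ⟨Int.floor_le _, (Int.lt_floor_add_one _).le⟩

def childv (v : Fin n → ℤ) (b : Fin n → Bool) : Fin n → ℤ :=
  fun i => 2 * v i + if b i then 1 else 0

lemma cast_childv (v : Fin n → ℤ) (b : Fin n → Bool) (i : Fin n) :
    ((childv v b i : ℤ) : ℝ) = 2 * (v i : ℝ) + if b i then 1 else 0 := by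
  unfold childv
  push_cast
  split <;> simp

lemma twopow (k : ℕ) (a : ℝ) : a / 2 ^ k = 2 * a / 2 ^ (k + 1) := by
  rw [pow_succ]
  field_simp

lemma child_subset {k : ℕ} {v : Fin n → ℤ} {b : Fin n → Bool} :
    cube (k + 1) (childv v b) ⊆ cube k v := by
  intro x hx
  rw [mem_cube_iff] at hx ⊢
  intro i
  obtain ⟨h1, h2⟩ := hx i
  rw [cast_childv] at h1 h2
  have hpos : (0:ℝ) < 2 ^ (k + 1) := by positivity
  constructor
  · rw [twopow k]
    refine le_trans ((div_le_div_iff_of_pos_right hpos).2 ?_) h1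
    split <;> linarith
  · rw [twopow k]
    refine le_trans h2 ((div_le_div_iff_of_pos_right hpos).2 ?_)
    split <;> linarith

lemma exists_child {k : ℕ} {v : Fin n → ℤ} {x : Fin n → ℝ} (hx : x ∈ cube k v) :
    ∃ b, x ∈ cube (k + 1) (childv v b) := by
  refine ⟨fun i => decide ((2 * (v i : ℝ) + 1) / 2 ^ (k + 1) < x i), ?_⟩
  rw [mem_cube_iff] at hx ⊢
  intro i
  obtain ⟨h1, h2⟩ := hx i
  rw [cast_childv]
  simp only [decide_eq_true_eq]
  by_cases hc : (2 * (v i : ℝ) + 1) / 2 ^ (k + 1) < x i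
  · rw [if_pos hc]
    rw [twopow k] at h2
    constructor
    · exact hc.le
    · calc x i ≤ (2 * ((v i : ℝ) + 1)) / 2 ^ (k + 1) := h2
        _ = (2 * (v i : ℝ) + 1 + 1) / 2 ^ (k + 1) := by ring_nf
  · rw [if_neg hc]
    push_neg at hc
    rw [twopow k] at h1
    constructor
    · calc (2 * (v i : ℝ) + 0) / 2 ^ (k + 1) = 2 * (v i : ℝ) / 2 ^ (k + 1) := by ring_nf
        _ ≤ x i := h1
    · calc x i ≤ (2 * (v i : ℝ) + 0 + 1) / 2 ^ (k + 1) := by rw [add_zero]; exact hc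

/-! ### N sets and the measurable ε-selection -/

section Selection

variable {n q : ℕ} {f : (Fin n → ℝ) × (Fin q → ℝ) → ℝ}
  {K : Set ((Fin n → ℝ) × (Fin q → ℝ))}

def Nset (f : (Fin n → ℝ) × (Fin q → ℝ) → ℝ) (K : Set ((Fin n → ℝ) × (Fin q → ℝ)))
    (ε : ℝ) (k : ℕ) (v : Fin n → ℤ) : Set (Fin q → ℝ) :=
  {y | ∃ x, (x, y) ∈ K ∧ x ∈ cube k v ∧ f (x, y) < gS f K y + ε}

lemma measurable_Nset (hK : IsCompact K) (hf : Continuous f) (ε : ℝ) (k : ℕ)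
    (v : Fin n → ℤ) : MeasurableSet (Nset f K ε k v) := by
  set A := K ∩ (cube k v ×ˢ (univ : Set (Fin q → ℝ))) with hA_def
  have hA : IsCompact A := hK.inter_right ((isClosed_cube k v).prod isClosed_univ)
  have heq : Nset f K ε k v = (Prod.snd '' A) ∩ {y | gS f A y < gS f K y + ε} := by
    ext y
    constructor
    · rintro ⟨x, hxK, hxc, hlt⟩
      have hxA : (x, y) ∈ A := ⟨hxK, hxc, mem_univ _⟩
      exact ⟨⟨(x, y), hxA, rfl⟩, lt_of_le_of_lt (gS_le hA hf hxA) hlt⟩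
    · rintro ⟨hy, hlt⟩
      obtain ⟨x, hxA, hfx⟩ := (gS_lt_iff hA hf hy).1 hlt
      exact ⟨x, hxA.1, hxA.2.1, hfx⟩
  rw [heq]
  exact ((hA.image continuous_snd).measurableSet).inter
    (measurableSet_lt (measurable_gS hA hf) ((measurable_gS hK hf).add_const ε))

lemma Nset_base (hK : IsCompact K) (hf : Continuous f) {ε : ℝ} (hε : 0 < ε)
    {y : Fin q → ℝ} (hy : y ∈ Prod.snd '' K) : ∃ v, y ∈ Nset f K ε 0 v := by
  obtain ⟨x, hxK, hlt⟩ := (gS_lt_iff hK hf hy).1 (lt_add_of_pos_right _ hε)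
  obtain ⟨v, hv⟩ := exists_cube0 x
  exact ⟨v, x, hxK, hv, hlt⟩

lemma Nset_step {ε : ℝ} {k : ℕ} {v : Fin n → ℤ} {y : Fin q → ℝ}
    (hy : y ∈ Nset f K ε k v) : ∃ b, y ∈ Nset f K ε (k + 1) (childv v b) := by
  obtain ⟨x, hxK, hxc, hlt⟩ := hy
  obtain ⟨b, hb⟩ := exists_child hxc
  exact ⟨b, x, hxK, hb, hlt⟩

lemma exists_selection (hK : IsCompact K) (hf : Continuous f) {ε : ℝ} (hε : 0 < ε) :
    ∃ s : (Fin q → ℝ) → (Fin n → ℝ), Measurable s ∧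
      ∀ y ∈ Prod.snd '' K, (s y, y) ∈ K ∧ f (s y, y) ≤ gS f K y + ε := by
  haveI : Encodable (Fin n → ℤ) := Encodable.ofCountable _
  haveI : Encodable (Fin n → Bool) := Encodable.ofCountable _
  -- the recursively defined cube indices
  let idx : ℕ → (Fin q → ℝ) → (Fin n → ℤ) :=
    fun k => Nat.rec (firstHit (fun v => Nset f K ε 0 v))
      (fun j prev y => childv (prev y)
        (firstHit (fun b => Nset f K ε (j + 1) (childv (prev y) b)) y)) k
  have hidx : ∀ k, Measurable (idx k) := by
    intro k
    induction k with
    | zero => exact measurable_firstHit (fun v => measurable_Nset hK hf ε 0 v)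
    | succ j ih =>
      have hrw : idx (j + 1) = (fun w : (Fin q → ℝ) × (Fin n → ℤ) =>
          childv w.2 (firstHit (fun b => Nset f K ε (j + 1) (childv w.2 b)) w.1)) ∘
          (fun y => (y, idx j y)) := rfl
      rw [hrw]
      refine Measurable.comp ?_ (measurable_id.prodMk ih)
      refine measurable_from_prod_countable_left (fun v => ?_)
      exact (measurable_of_countable (childv v)).comp
        (measurable_firstHit (fun b => measurable_Nset hK hf ε (j + 1) (childv v b)))
  have hinv : ∀ y ∈ Prod.snd '' K, ∀ k, y ∈ Nset f K ε k (idx k y) := by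
    intro y hy k
    induction k with
    | zero => exact firstHit_mem (Nset_base hK hf hε hy)
    | succ j ih => exact firstHit_mem (Nset_step ih)
  have hnest : ∀ (y : Fin q → ℝ) (k : ℕ), cube (k + 1) (idx (k + 1) y) ⊆ cube k (idx k y) :=
    fun y k => child_subset
  -- approximations and their limit
  set sfun : ℕ → (Fin q → ℝ) → (Fin n → ℝ) := fun k y => corner k (idx k y) with hsfun_def
  have hsfun_mem : ∀ k y, sfun k y ∈ cube k (idx k y) := fun k y => corner_mem k (idx k y)
  have hcauchy : ∀ y, CauchySeq (fun k => sfun k y) := by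
    intro y
    refine cauchySeq_of_le_geometric (1 / 2) 1 (by norm_num) (fun k => ?_)
    rw [one_mul]
    exact dist_le_of_mem_cube (hsfun_mem k y) (hnest y k (hsfun_mem (k + 1) y))
  set s : (Fin q → ℝ) → (Fin n → ℝ) := fun y => limUnder atTop (fun k => sfun k y) with hs_def
  have htend : ∀ y, Tendsto (fun k => sfun k y) atTop (𝓝 (s y)) :=
    fun y => (hcauchy y).tendsto_limUnder
  have hsmeas : Measurable s := by
    refine measurable_of_tendsto_metrizable
      (f := sfun) (fun k => (measurable_of_countable (corner k)).comp (hidx k)) ?_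
    rw [tendsto_pi_nhds]
    exact htend
  refine ⟨s, hsmeas, fun y hy => ?_⟩
  choose x hx1 hx2 hx3 using fun k => hinv y hy k
  have hdist : ∀ k, dist (x k) (sfun k y) ≤ (1 / 2) ^ k :=
    fun k => dist_le_of_mem_cube (hx2 k) (hsfun_mem k y)
  have hxlim : Tendsto (fun k => x k) atTop (𝓝 (s y)) := by
    rw [tendsto_iff_dist_tendsto_zero]
    have hb : Tendsto (fun k => (1 / 2 : ℝ) ^ k + dist (sfun k y) (s y)) atTop (𝓝 0) := by
      have h1 : Tendsto (fun k => (1 / 2 : ℝ) ^ k) atTop (𝓝 0) :=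
        tendsto_pow_atTop_nhds_zero_of_lt_one (by norm_num) (by norm_num)
      have h2 : Tendsto (fun k => dist (sfun k y) (s y)) atTop (𝓝 0) :=
        tendsto_iff_dist_tendsto_zero.1 (htend y)
      simpa using h1.add h2
    refine squeeze_zero (fun k => dist_nonneg) (fun k => ?_) hb
    calc dist (x k) (s y) ≤ dist (x k) (sfun k y) + dist (sfun k y) (s y) := dist_triangle _ _ _
      _ ≤ (1 / 2) ^ k + dist (sfun k y) (s y) := by
          have := hdist k; gcongr
  have hpair : Tendsto (fun k => (x k, y)) atTop (𝓝 (s y, y)) :=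
    hxlim.prodMk_nhds tendsto_const_nhds
  constructor
  · exact hK.isClosed.mem_of_tendsto hpair (Eventually.of_forall hx1)
  · have hfl : Tendsto (fun k => f (x k, y)) atTop (𝓝 (f (s y, y))) :=
      (hf.tendsto _).comp hpair
    exact le_of_tendsto hfl (Eventually.of_forall (fun k => (hx3 k).le))

end Selection


/-! ### Dual side: polynomial approximation from below -/

lemma dual_approx {n q : ℕ} {f : (Fin n → ℝ) × (Fin q → ℝ) → ℝ}
    {K : Set ((Fin n → ℝ) × (Fin q → ℝ))} (hK : IsCompact K) (hf : Continuous f)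
    {Y : Set (Fin q → ℝ)} (hY : IsCompact Y) (hYS : Prod.snd '' K = Y) (hYne : Y.Nonempty)
    {C : ℝ} (hC : ∀ z ∈ K, ‖f z‖ ≤ C)
    (φ : Measure (Fin q → ℝ)) [IsProbabilityMeasure φ] (hae : ∀ᵐ y ∂φ, y ∈ Y)
    {ε : ℝ} (hε : 0 < ε) :
    ∃ qp : MvPolynomial (Fin q) ℝ, (∀ z ∈ K, MvPolynomial.eval z.2 qp ≤ f z) ∧
      (∫ y, gS f K y ∂φ) - ε ≤ ∫ y, MvPolynomial.eval y qp ∂φ := by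
  set g : (Fin q → ℝ) → ℝ := gS f K with hg_def
  -- bounds on g over Y
  have habs : ∀ z ∈ K, |f z| ≤ C := by simpa [Real.norm_eq_abs] using hC
  have hgelb : ∀ y ∈ Y, -C ≤ g y := by
    intro y hy
    rw [← hYS] at hy
    exact le_gS (fun x hx => (abs_le.1 (habs _ hx)).1) hy
  have hgub : ∀ y ∈ Y, g y ≤ C := by
    intro y hy
    rw [← hYS] at hy
    obtain ⟨z, hz, rfl⟩ := hy
    exact le_trans (gS_le hK hf hz) (abs_le.1 (habs _ hz)).2
  have hgabs : ∀ y ∈ Y, |g y| ≤ C := fun y hy => abs_le.2 ⟨hgelb y hy, hgub y hy⟩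
  -- the inf-convolutions
  set gN : ℕ → (Fin q → ℝ) → ℝ :=
    fun N y => sInf ((fun y' => g y' + N * dist y y') '' Y) with hgN_def
  have hne : ∀ (N : ℕ) (y : Fin q → ℝ),
      ((fun y' => g y' + N * dist y y') '' Y).Nonempty := fun N y => hYne.image _
  have hbdd : ∀ (N : ℕ) (y : Fin q → ℝ),
      BddBelow ((fun y' => g y' + N * dist y y') '' Y) := by
    rintro N y
    refine ⟨-C, ?_⟩
    rintro _ ⟨y', hy', rfl⟩
    dsimp only
    have h1 := hgelb y' hy'
    have h2 : 0 ≤ (N : ℝ) * dist y y' :=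
      mul_nonneg (Nat.cast_nonneg N) dist_nonneg
    linarith
  have hgN_le_elt : ∀ (N : ℕ) (y : Fin q → ℝ) (y' : Fin q → ℝ), y' ∈ Y →
      gN N y ≤ g y' + N * dist y y' := fun N y y' hy' => csInf_le (hbdd N y) ⟨y', hy', rfl⟩
  have hgN_le_g : ∀ (N : ℕ), ∀ y ∈ Y, gN N y ≤ g y := by
    intro N y hy
    simpa [dist_self] using hgN_le_elt N y y hy
  have hgN_lb : ∀ (N : ℕ) (y : Fin q → ℝ), -C ≤ gN N y := by
    intro N y
    refine le_csInf (hne N y) ?_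
    rintro _ ⟨y', hy', rfl⟩
    dsimp only
    have h1 := hgelb y' hy'
    have h2 : 0 ≤ (N : ℝ) * dist y y' := mul_nonneg (Nat.cast_nonneg N) dist_nonneg
    linarith
  have hgNabs : ∀ (N : ℕ), ∀ y ∈ Y, |gN N y| ≤ C :=
    fun N y hy => abs_le.2 ⟨hgN_lb N y, le_trans (hgN_le_g N y hy) (hgub y hy)⟩
  have hmono : ∀ y, Monotone (fun N => gN N y) := by
    intro y N M hNM
    refine le_csInf (hne M y) ?_
    rintro _ ⟨y', hy', rfl⟩
    dsimp only
    have h1 := hgN_le_elt N y y' hy'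
    have h2 : (N : ℝ) * dist y y' ≤ (M : ℝ) * dist y y' :=
      mul_le_mul_of_nonneg_right (Nat.cast_le.2 hNM) dist_nonneg
    linarith
  have hkey : ∀ (N : ℕ) (y z : Fin q → ℝ), gN N y ≤ gN N z + N * dist y z := by
    intro N y z
    rw [← sub_le_iff_le_add]
    refine le_csInf (hne N z) ?_
    rintro _ ⟨y', hy', rfl⟩
    dsimp only
    have h1 := hgN_le_elt N y y' hy'
    have h2 : dist y y' ≤ dist y z + dist z y' := dist_triangle y z y'
    have h3 : (N : ℝ) * dist y y' ≤ (N : ℝ) * (dist y z + dist z y') :=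
      mul_le_mul_of_nonneg_left h2 (Nat.cast_nonneg N)
    linarith
  have hcont : ∀ N : ℕ, Continuous (gN N) := by
    intro N
    refine LipschitzWith.continuous (K := (N : ℝ≥0)) (LipschitzWith.of_dist_le_mul ?_)
    intro a b
    rw [Real.dist_eq]
    have h1 := hkey N a b
    have h2 := hkey N b a
    rw [dist_comm b a] at h2
    have hcoe : ((N : ℝ≥0) : ℝ) = (N : ℝ) := by simp
    rw [hcoe]
    exact abs_sub_le_iff.2 ⟨by linarith, by linarith⟩
  -- pointwise convergence on Y
  have htendsto : ∀ y ∈ Y, Filter.Tendsto (fun N => gN N y) Filter.atTop (nhds (g y)) := by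
    intro y hy
    rw [tendsto_order]
    constructor
    · intro a ha
      set a' : ℝ := (a + g y) / 2 with ha'_def
      have haa' : a < a' := by rw [ha'_def]; linarith
      have ha'g : a' < g y := by rw [ha'_def]; linarith
      set Sc : Set (Fin q → ℝ) := Prod.snd '' (K ∩ f ⁻¹' (Iic a')) with hSc_def
      have hScc : IsCompact Sc :=
        (hK.inter_right (isClosed_Iic.preimage hf)).image continuous_snd
      have hynot : y ∉ Sc := by
        rintro ⟨z, ⟨hzK, hzf⟩, hz2⟩
        have : g z.2 ≤ f z := gS_le hK hf hzK
        rw [hz2] at this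
        simp only [mem_preimage, mem_Iic] at hzf
        linarith
      have hmem : Scᶜ ∈ nhds y := hScc.isClosed.isOpen_compl.mem_nhds hynot
      obtain ⟨δ, hδpos, hball⟩ := Metric.mem_nhds_iff.1 hmem
      obtain ⟨N₀, hN₀⟩ := exists_nat_gt ((a' + C) / δ)
      rw [Filter.eventually_atTop]
      refine ⟨N₀, fun N hN => ?_⟩
      have hN' : (a' + C) / δ < (N : ℝ) := lt_of_lt_of_le hN₀ (Nat.cast_le.2 hN)
      have hNδ : a' + C < (N : ℝ) * δ := by
        rw [div_lt_iff₀ hδpos] at hN'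
        linarith
      refine lt_of_lt_of_le haa' (le_csInf (hne N y) ?_)
      rintro _ ⟨y', hy', rfl⟩
      dsimp only
      by_cases hd : dist y y' < δ
      · have hy'ball : y' ∈ Metric.ball y δ := by
          rw [Metric.mem_ball, dist_comm]
          exact hd
        have hy'not : y' ∉ Sc := hball hy'ball
        have hgy' : a' ≤ g y' := by
          rw [← hYS] at hy'
          refine le_gS (fun x hx => ?_) hy'
          by_contra hcon
          push_neg at hcon
          exact hy'not ⟨(x, y'), ⟨hx, by simp only [mem_preimage, mem_Iic]; linarith⟩, rfl⟩
        have : 0 ≤ (N : ℝ) * dist y y' := mul_nonneg (Nat.cast_nonneg N) dist_nonneg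
        linarith
      · push_neg at hd
        have h1 := hgelb y' hy'
        have h2 : (N : ℝ) * δ ≤ (N : ℝ) * dist y y' :=
          mul_le_mul_of_nonneg_left hd (Nat.cast_nonneg N)
        linarith
    · intro b hb
      exact Filter.Eventually.of_forall (fun N => lt_of_le_of_lt (hgN_le_g N y hy) hb)
  -- integrability
  have hIg : Integrable g φ := by
    refine Integrable.mono' (integrable_const C)
      ((measurable_gS hK hf).aestronglyMeasurable) ?_
    filter_upwards [hae] with y hy
    simpa [Real.norm_eq_abs] using hgabs y hy
  have hIgN : ∀ N : ℕ, Integrable (gN N) φ := by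
    intro N
    refine Integrable.mono' (integrable_const C) ((hcont N).aestronglyMeasurable) ?_
    filter_upwards [hae] with y hy
    simpa [Real.norm_eq_abs] using hgNabs N y hy
  have hconv : Filter.Tendsto (fun N => ∫ y, gN N y ∂φ) Filter.atTop
      (nhds (∫ y, g y ∂φ)) := by
    refine integral_tendsto_of_tendsto_of_monotone hIgN hIg
      (Filter.Eventually.of_forall hmono) ?_
    filter_upwards [hae] with y hy
    exact htendsto y hy
  have hev : ∀ᶠ N in Filter.atTop, (∫ y, g y ∂φ) - ε / 2 < ∫ y, gN N y ∂φ :=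
    hconv.eventually (eventually_gt_nhds (by linarith))
  obtain ⟨N, hNint⟩ := hev.exists
  -- Stone–Weierstrass on Y
  haveI : CompactSpace ↥Y := isCompact_iff_compactSpace.1 hY
  set coordfns : Fin q → C(↥Y, ℝ) :=
    fun i => ⟨fun y => (y : Fin q → ℝ) i, (continuous_apply i).comp continuous_subtype_val⟩
    with hcoord_def
  set Φ : MvPolynomial (Fin q) ℝ →ₐ[ℝ] C(↥Y, ℝ) := MvPolynomial.aeval coordfns with hΦ_def
  have heval : ∀ (qq : MvPolynomial (Fin q) ℝ) (z : ↥Y),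
      (Φ qq) z = MvPolynomial.eval (z : Fin q → ℝ) qq := by
    intro qq z
    induction qq using MvPolynomial.induction_on with
    | C a => simp [hΦ_def]
    | add p1 p2 hp1 hp2 => simp [map_add, hp1, hp2]
    | mul_X p1 i hp1 =>
      rw [map_mul, ContinuousMap.mul_apply, hp1]; simp [hΦ_def, hcoord_def]
  have hsep : (Φ.range : Subalgebra ℝ C(↥Y, ℝ)).SeparatesPoints := by
    intro x y hxy
    have hv : (x : Fin q → ℝ) ≠ (y : Fin q → ℝ) := fun h => hxy (Subtype.ext h)
    obtain ⟨i, hi⟩ := Function.ne_iff.1 hv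
    refine ⟨⇑(Φ (MvPolynomial.X i)), ?_, ?_⟩
    · exact ⟨Φ (MvPolynomial.X i),
        SetLike.mem_coe.2 (Φ.mem_range.2 ⟨MvPolynomial.X i, rfl⟩), rfl⟩
    · rw [heval, heval, MvPolynomial.eval_X, MvPolynomial.eval_X]
      exact hi
  have htc : Continuous (fun z : ↥Y => gN N (z : Fin q → ℝ) - ε / 4) :=
    ((hcont N).comp continuous_subtype_val).sub continuous_const
  obtain ⟨g₀, hg₀⟩ := ContinuousMap.exists_mem_subalgebra_near_continuous_of_separatesPoints
    Φ.range hsep (fun z : ↥Y => gN N (z : Fin q → ℝ) - ε / 4) htc (ε / 4) (by linarith)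
  obtain ⟨qp, hqp⟩ := Φ.mem_range.1 g₀.2
  have hkey2 : ∀ y (hy : y ∈ Y),
      |MvPolynomial.eval y qp - (gN N y - ε / 4)| < ε / 4 := by
    intro y hy
    have := hg₀ ⟨y, hy⟩
    rw [Real.norm_eq_abs] at this
    have h2 : (g₀ : C(↥Y, ℝ)) ⟨y, hy⟩ = MvPolynomial.eval y qp := by
      rw [← hqp, heval]
    rwa [h2] at this
  refine ⟨qp, ?_, ?_⟩
  · intro z hz
    have hzY : z.2 ∈ Y := by rw [← hYS]; exact ⟨z, hz, rfl⟩
    have h1 := (abs_lt.1 (hkey2 z.2 hzY)).2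
    have h2 := hgN_le_g N z.2 hzY
    have h3 : g z.2 ≤ f z := gS_le hK hf hz
    linarith
  · have hIq : Integrable (fun y => MvPolynomial.eval y qp) φ := by
      refine Integrable.mono' (integrable_const (C + ε))
        ((MvPolynomial.continuous_eval qp).aestronglyMeasurable) ?_
      filter_upwards [hae] with y hy
      obtain ⟨h1a, h1b⟩ := abs_lt.1 (hkey2 y hy)
      obtain ⟨h2a, h2b⟩ := abs_le.1 (hgNabs N y hy)
      rw [Real.norm_eq_abs, abs_le]
      constructor <;> linarith
    have hle : ∀ᵐ y ∂φ, gN N y - ε / 2 ≤ MvPolynomial.eval y qp := by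
      filter_upwards [hae] with y hy
      have h1 := (abs_lt.1 (hkey2 y hy)).1
      linarith
    have hmon : ∫ y, (gN N y - ε / 2) ∂φ ≤ ∫ y, MvPolynomial.eval y qp ∂φ :=
      integral_mono_ae ((hIgN N).sub (integrable_const (ε / 2))) hIq hle
    rw [integral_sub (hIgN N) (integrable_const (ε / 2))] at hmon
    have hc : ∫ _, (ε / 2 : ℝ) ∂φ = ε / 2 := by
      simp [integral_const, measure_univ]
    rw [hc] at hmon
    linarith

end NDG

open MeasureTheory

/-- No duality gap: ρ = inf {∫_K f dμ : μ prob. on K with marginal φ} equals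
ρ* = sup {∫_Y p dφ : p polynomial in y with f(x,y) ≥ p(y) on K}. -/
theorem stmt_5 (n p : ℕ)
    (Y : Set (Fin p → ℝ)) (K : Set ((Fin n → ℝ) × (Fin p → ℝ)))
    (hY : IsCompact Y) (hK : IsCompact K)
    (hKY : ∀ z ∈ K, z.2 ∈ Y)
    (hfib : ∀ y ∈ Y, ∃ x, (x, y) ∈ K)
    (f : (Fin n → ℝ) × (Fin p → ℝ) → ℝ) (hf : Continuous f)
    (φ : Measure (Fin p → ℝ)) [IsProbabilityMeasure φ] (hφY : φ Y = 1)
    (hsupp : ∀ U : Set (Fin p → ℝ), IsOpen U → (U ∩ Y).Nonempty → φ U ≠ 0) :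
    sInf {r : ℝ | ∃ μ : Measure ((Fin n → ℝ) × (Fin p → ℝ)),
        IsProbabilityMeasure μ ∧ μ K = 1 ∧ μ.map Prod.snd = φ ∧
        r = ∫ z, f z ∂μ} =
    sSup {r : ℝ | ∃ q : MvPolynomial (Fin p) ℝ,
        (∀ z ∈ K, MvPolynomial.eval z.2 q ≤ f z) ∧
        r = ∫ y, MvPolynomial.eval y q ∂φ} := by
  classical
  have hYmeas : MeasurableSet Y := hY.isClosed.measurableSet
  have hYne : Y.Nonempty := by
    rcases Set.eq_empty_or_nonempty Y with h | h
    · exfalso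
      rw [h, measure_empty] at hφY
      exact one_ne_zero hφY.symm
    · exact h
  have hYS : Prod.snd '' K = Y := by
    apply Set.Subset.antisymm
    · rintro _ ⟨z, hz, rfl⟩
      exact hKY z hz
    · intro y hy
      obtain ⟨x, hx⟩ := hfib y hy
      exact ⟨(x, y), hx, rfl⟩
  obtain ⟨C, hC⟩ := hK.exists_bound_of_continuousOn hf.continuousOn
  set g := NDG.gS f K with hg_def
  have hgmeas : Measurable g := NDG.measurable_gS hK hf
  have habs : ∀ z ∈ K, |f z| ≤ C := by simpa [Real.norm_eq_abs] using hC
  have hgelb : ∀ y ∈ Y, -C ≤ g y := by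
    intro y hy
    rw [← hYS] at hy
    exact NDG.le_gS (fun x hx => (abs_le.1 (habs _ hx)).1) hy
  have hgub : ∀ y ∈ Y, g y ≤ C := by
    intro y hy
    rw [← hYS] at hy
    obtain ⟨z, hz, rfl⟩ := hy
    exact le_trans (NDG.gS_le hK hf hz) (abs_le.1 (habs _ hz)).2
  have hae : ∀ᵐ y ∂φ, y ∈ Y := by
    have hcompl : φ Yᶜ = 0 := by
      have h2 := measure_compl hYmeas (measure_ne_top φ Y)
      rw [hφY, measure_univ] at h2
      simpa using h2
    rw [MeasureTheory.ae_iff]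
    exact hcompl
  have hIg : Integrable g φ := by
    refine Integrable.mono' (integrable_const C) hgmeas.aestronglyMeasurable ?_
    filter_upwards [hae] with y hy
    rw [Real.norm_eq_abs]
    exact abs_le.2 ⟨hgelb y hy, hgub y hy⟩
  -- every primal value is at least ∫ g dφ
  have hlow : ∀ r ∈ {r : ℝ | ∃ μ : Measure ((Fin n → ℝ) × (Fin p → ℝ)),
      IsProbabilityMeasure μ ∧ μ K = 1 ∧ μ.map Prod.snd = φ ∧
      r = ∫ z, f z ∂μ}, (∫ y, g y ∂φ) ≤ r := by
    rintro r ⟨μ, hμprob, hμK, hμmap, rfl⟩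
    haveI := hμprob
    have hKae : ∀ᵐ z ∂μ, z ∈ K := by
      have hcompl : μ Kᶜ = 0 := by
        have h2 := measure_compl hK.isClosed.measurableSet (measure_ne_top μ K)
        rw [hμK, measure_univ] at h2
        simpa using h2
      rw [MeasureTheory.ae_iff]
      exact hcompl
    have hIf : Integrable f μ := by
      refine Integrable.mono' (integrable_const C) hf.aestronglyMeasurable ?_
      filter_upwards [hKae] with z hz
      exact hC z hz
    have hIgs : Integrable (fun z => g z.2) μ := by
      refine Integrable.mono' (integrable_const C)
        (hgmeas.comp measurable_snd).aestronglyMeasurable ?_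
      filter_upwards [hKae] with z hz
      rw [Real.norm_eq_abs]
      exact abs_le.2 ⟨hgelb _ (hKY z hz), hgub _ (hKY z hz)⟩
    have hpt : ∀ᵐ z ∂μ, g z.2 ≤ f z := by
      filter_upwards [hKae] with z hz
      exact NDG.gS_le hK hf hz
    have h1 : ∫ z, g z.2 ∂μ ≤ ∫ z, f z ∂μ := integral_mono_ae hIgs hIf hpt
    have h2 : ∫ y, g y ∂φ = ∫ z, g z.2 ∂μ := by
      rw [← hμmap, integral_map measurable_snd.aemeasurable]
      rw [hμmap]
      exact hgmeas.aestronglyMeasurable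
    linarith
  -- primal values come ε-close to ∫ g dφ
  have hub : ∀ ε : ℝ, 0 < ε → ∃ r ∈ {r : ℝ | ∃ μ : Measure ((Fin n → ℝ) × (Fin p → ℝ)),
      IsProbabilityMeasure μ ∧ μ K = 1 ∧ μ.map Prod.snd = φ ∧
      r = ∫ z, f z ∂μ}, r ≤ (∫ y, g y ∂φ) + ε := by
    intro ε hε
    obtain ⟨s, hsmeas, hs⟩ := NDG.exists_selection hK hf hε
    have hsY : ∀ y ∈ Y, (s y, y) ∈ K ∧ f (s y, y) ≤ g y + ε := by
      intro y hy
      rw [← hYS] at hy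
      exact hs y hy
    set T : (Fin p → ℝ) → (Fin n → ℝ) × (Fin p → ℝ) := fun y => (s y, y) with hT_def
    have hTmeas : Measurable T := hsmeas.prodMk measurable_id
    set μ := φ.map T with hμ_def
    haveI : IsProbabilityMeasure μ := Measure.isProbabilityMeasure_map hTmeas.aemeasurable
    have hμK : μ K = 1 := by
      rw [hμ_def, Measure.map_apply hTmeas hK.isClosed.measurableSet]
      refine le_antisymm prob_le_one ?_
      rw [← hφY]
      exact measure_mono (fun y hy => (hsY y hy).1)
    have hμmap : μ.map Prod.snd = φ := by
      rw [hμ_def, Measure.map_map measurable_snd hTmeas]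
      have h3 : Prod.snd ∘ T = id := rfl
      rw [h3, Measure.map_id]
    refine ⟨∫ z, f z ∂μ, ⟨μ, ‹_›, hμK, hμmap, rfl⟩, ?_⟩
    rw [hμ_def, integral_map hTmeas.aemeasurable hf.aestronglyMeasurable]
    have hIfs : Integrable (fun y => f (T y)) φ := by
      refine Integrable.mono' (integrable_const C)
        ((hf.measurable.comp hTmeas).aestronglyMeasurable) ?_
      filter_upwards [hae] with y hy
      exact hC _ (hsY y hy).1
    have hptw : ∀ᵐ y ∂φ, f (T y) ≤ g y + ε := by
      filter_upwards [hae] with y hy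
      exact (hsY y hy).2
    calc ∫ y, f (T y) ∂φ ≤ ∫ y, (g y + ε) ∂φ :=
          integral_mono_ae hIfs (hIg.add (integrable_const ε)) hptw
      _ = (∫ y, g y ∂φ) + ε := by
          rw [integral_add hIg (integrable_const ε)]
          simp [integral_const, measure_univ]
  -- the primal value
  have hprimal : sInf {r : ℝ | ∃ μ : Measure ((Fin n → ℝ) × (Fin p → ℝ)),
      IsProbabilityMeasure μ ∧ μ K = 1 ∧ μ.map Prod.snd = φ ∧
      r = ∫ z, f z ∂μ} = ∫ y, g y ∂φ := by
    apply le_antisymm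
    · refine le_of_forall_pos_le_add (fun ε hε => ?_)
      obtain ⟨r, hrmem, hrle⟩ := hub ε hε
      exact le_trans (csInf_le ⟨∫ y, g y ∂φ, fun r' hr' => hlow r' hr'⟩ hrmem) hrle
    · obtain ⟨r, hrmem, _⟩ := hub 1 one_pos
      exact le_csInf ⟨r, hrmem⟩ hlow
  -- every dual value is at most ∫ g dφ
  have hdub : ∀ r ∈ {r : ℝ | ∃ q : MvPolynomial (Fin p) ℝ,
      (∀ z ∈ K, MvPolynomial.eval z.2 q ≤ f z) ∧
      r = ∫ y, MvPolynomial.eval y q ∂φ}, r ≤ ∫ y, g y ∂φ := by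
    rintro r ⟨qq, hfeas, rfl⟩
    have hqc : Continuous (fun y => MvPolynomial.eval y qq) :=
      MvPolynomial.continuous_eval qq
    obtain ⟨D, hD⟩ := hY.exists_bound_of_continuousOn hqc.continuousOn
    have hIq : Integrable (fun y => MvPolynomial.eval y qq) φ := by
      refine Integrable.mono' (integrable_const D) hqc.aestronglyMeasurable ?_
      filter_upwards [hae] with y hy
      exact hD y hy
    refine integral_mono_ae hIq hIg ?_
    filter_upwards [hae] with y hy
    rw [← hYS] at hy
    exact NDG.le_gS (fun x hx => hfeas (x, y) hx) hy
  -- dual values come ε-close to ∫ g dφ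
  have hdlb : ∀ ε : ℝ, 0 < ε → ∃ r ∈ {r : ℝ | ∃ q : MvPolynomial (Fin p) ℝ,
      (∀ z ∈ K, MvPolynomial.eval z.2 q ≤ f z) ∧
      r = ∫ y, MvPolynomial.eval y q ∂φ}, (∫ y, g y ∂φ) - ε ≤ r := by
    intro ε hε
    obtain ⟨qp, hfeas, hint⟩ := NDG.dual_approx hK hf hY hYS hYne hC φ hae hε
    exact ⟨∫ y, MvPolynomial.eval y qp ∂φ, ⟨qp, hfeas, rfl⟩, hint⟩
  have hdual : sSup {r : ℝ | ∃ q : MvPolynomial (Fin p) ℝ,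
      (∀ z ∈ K, MvPolynomial.eval z.2 q ≤ f z) ∧
      r = ∫ y, MvPolynomial.eval y q ∂φ} = ∫ y, g y ∂φ := by
    apply le_antisymm
    · obtain ⟨r0, hr0, _⟩ := hdlb 1 one_pos
      exact csSup_le ⟨r0, hr0⟩ hdub
    · refine le_of_forall_pos_le_add (fun ε hε => ?_)
      obtain ⟨r, hrmem, hrle⟩ := hdlb ε hε
      have hle := le_csSup ⟨∫ y, g y ∂φ, hdub⟩ hrmem
      linarith
  rw [hprimal, hdual]
end
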